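/- arXiv:2201.09445 — 4 statements merged into one kernel-verified Lean document; each statement's English description precedes it below -/
import Mathlib

section
/- Let a₁/b₁, ..., aₘ/bₘ and c₁/d₁, ..., cₖ/dₖ be rational numbers (with bᵢ, dⱼ > 0). If for all i and j we have aᵢ/bᵢ ≤ cⱼ/dⱼ - (bᵢ - 1)(dⱼ - 1)/(bᵢ dⱼ), then there exists an integer n satisfying n ≥ aᵢ/bᵢ for all i and n ≤ cⱼ/dⱼ for all j. -/
/-!
For `x = a / b` the ceiling is at most `x + 1 - 1 / b`, and for `y = c / d` the floor is at least
`y - 1 + 1 / d`, because the fractional parts are multiples of `1 / b` and `1 / d`. Since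
`(b - 1)(d - 1) / (bd) = 1 - 1/b - 1/d + 1/(bd)`, the hypothesis then gives
`⌈aᵢ / bᵢ⌉ < ⌊cⱼ / dⱼ⌋ + 1`, i.e. `⌈aᵢ / bᵢ⌉ ≤ ⌊cⱼ / dⱼ⌋` for all `i, j`; any integer between the
finitely many ceilings and floors works.
-/

namespace Int

variable {K : Type*} [Field K] [LinearOrder K] [IsStrictOrderedRing K] [FloorRing K]

theorem ceil_intCast_div_le (a : ℤ) {b : ℤ} (hb : 0 < b) :
    (⌈(a : K) / b⌉ : K) ≤ a / b + 1 - 1 / b := by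
  have hbK : (0 : K) < b := by exact_mod_cast hb
  have hlt : ((⌈(a : K) / b⌉ - 1 : ℤ) : K) < a / b := by
    push_cast
    linarith [Int.ceil_lt_add_one ((a : K) / b)]
  have hlt_int : (⌈(a : K) / b⌉ - 1) * b < a := by exact_mod_cast (lt_div_iff₀ hbK).mp hlt
  have hle : ((⌈(a : K) / b⌉ : K) - 1) * b ≤ a - 1 := by
    exact_mod_cast Int.le_sub_one_of_lt hlt_int
  have hdiv := (le_div_iff₀ hbK).mpr hle
  rw [sub_div] at hdiv
  linarith

theorem intCast_div_sub_one_add_le_floor (c : ℤ) {d : ℤ} (hd : 0 < d) :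
    (c : K) / d - 1 + 1 / d ≤ ⌊(c : K) / d⌋ := by
  have := ceil_intCast_div_le (K := K) (-c) hd
  rw [Int.cast_neg, neg_div, Int.ceil_neg, Int.cast_neg] at this
  linarith

theorem ceil_intCast_div_le_floor_intCast_div {a b c d : ℤ} (hb : 0 < b) (hd : 0 < d)
    (h : (a : K) / b ≤ c / d - (b - 1) * (d - 1) / (b * d)) :
    ⌈(a : K) / b⌉ ≤ ⌊(c : K) / d⌋ := by
  have hbK : (0 : K) < b := by exact_mod_cast hb
  have hdK : (0 : K) < d := by exact_mod_cast hd
  have hexpand : ((b : K) - 1) * (d - 1) / (b * d) = 1 - 1 / b - 1 / d + 1 / (b * d) := by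
    field_simp
    ring
  have hbd : (0 : K) < 1 / (b * d) := by positivity
  have hceil := ceil_intCast_div_le (K := K) a hb
  have hfloor := intCast_div_sub_one_add_le_floor (K := K) c hd
  rw [← Int.lt_add_one_iff, ← Int.cast_lt (R := K), Int.cast_add, Int.cast_one]
  linarith

end Int

theorem exists_forall_le_forall_le_of_le {ι κ α : Type*} [Fintype ι] [Finite κ] [Lattice α]
    [Nonempty α] (f : ι → α) (g : κ → α) (h : ∀ i j, f i ≤ g j) :
    ∃ x, (∀ i, f i ≤ x) ∧ ∀ j, x ≤ g j := by
  cases isEmpty_or_nonempty ι with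
  | inl _ =>
    obtain ⟨x, hx⟩ := (Set.finite_range g).bddBelow
    exact ⟨x, isEmptyElim, fun j => hx (Set.mem_range_self j)⟩
  | inr _ =>
    exact ⟨Finset.univ.sup' Finset.univ_nonempty f, fun i => Finset.le_sup' f (Finset.mem_univ i),
      fun j => Finset.sup'_le _ _ fun i _ => h i j⟩

/-- **Integer point criterion for a system of rational bounds.**
Given rationals `aᵢ/bᵢ` and `cⱼ/dⱼ` (with `bᵢ, dⱼ > 0`), if for all `i, j` we have
`aᵢ/bᵢ ≤ cⱼ/dⱼ - (bᵢ - 1)(dⱼ - 1)/(bᵢ dⱼ)`, then there is an integer `n` with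
`aᵢ/bᵢ ≤ n` for all `i` and `n ≤ cⱼ/dⱼ` for all `j`. -/
theorem exists_int_of_pairwise_bounds (m k : ℕ) (a b : Fin m → ℤ) (c d : Fin k → ℤ)
    (hb : ∀ i, 0 < b i) (hd : ∀ j, 0 < d j)
    (h : ∀ i j, (a i : ℚ) / (b i : ℚ) ≤ (c j : ℚ) / (d j : ℚ) -
      ((b i : ℚ) - 1) * ((d j : ℚ) - 1) / ((b i : ℚ) * (d j : ℚ))) :
    ∃ n : ℤ, (∀ i, (a i : ℚ) / (b i : ℚ) ≤ (n : ℚ)) ∧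
      (∀ j, (n : ℚ) ≤ (c j : ℚ) / (d j : ℚ)) := by
  obtain ⟨n, hceil, hfloor⟩ := exists_forall_le_forall_le_of_le
    (fun i => ⌈(a i : ℚ) / b i⌉) (fun j => ⌊(c j : ℚ) / d j⌋)
    fun i j => Int.ceil_intCast_div_le_floor_intCast_div (hb i) (hd j) (h i j)
  exact ⟨n, fun i => Int.ceil_le.mp (hceil i), fun j => Int.le_floor.mp (hfloor j)⟩
end

section
/- Let a and b be integers with a rational (fraction) a/b represented with denominator b > 0, and c/d similarly with d > 0. If a/b ≤ c/d - (b-1)(d-1)/(bd), then there exists an integer n with a/b ≤ n ≤ c/d. -/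
/-- **Two-fraction integer point criterion.**
For integers `a, b, c, d` with `b, d > 0`: if `a/b ≤ c/d - (b-1)(d-1)/(bd)`,
then the interval `[a/b, c/d]` contains an integer. -/
theorem exists_int_between_of_bound (a b c d : ℤ) (hb : 0 < b) (hd : 0 < d)
    (h : (a : ℚ) / (b : ℚ) ≤ (c : ℚ) / (d : ℚ) -
      ((b : ℚ) - 1) * ((d : ℚ) - 1) / ((b : ℚ) * (d : ℚ))) :
    ∃ n : ℤ, (a : ℚ) / (b : ℚ) ≤ (n : ℚ) ∧ (n : ℚ) ≤ (c : ℚ) / (d : ℚ) := by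
  have hbq : (0:ℚ) < (b:ℚ) := by exact_mod_cast hb
  have hdq : (0:ℚ) < (d:ℚ) := by exact_mod_cast hd
  refine ⟨⌈(a:ℚ)/(b:ℚ)⌉, Int.le_ceil _, ?_⟩
  set n : ℤ := ⌈(a:ℚ)/(b:ℚ)⌉ with hn
  -- n*b ≤ a + b - 1
  have h1 : (n:ℚ) < (a:ℚ)/(b:ℚ) + 1 := Int.ceil_lt_add_one _
  have h2 : n * b < a + b := by
    have h2' : (n:ℚ) * b < ((a:ℚ)/(b:ℚ) + 1) * b := mul_lt_mul_of_pos_right h1 hbq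
    rw [add_mul, div_mul_cancel₀ _ hbq.ne', one_mul] at h2'
    exact_mod_cast h2'
  -- clear denominators in h
  have h3q : (a:ℚ)*d + ((b:ℚ)-1)*((d:ℚ)-1) ≤ (c:ℚ)*b := by
    rw [div_sub_div _ _ hdq.ne' (by positivity : ((b:ℚ)*(d:ℚ)) ≠ 0),
      div_le_div_iff₀ hbq (by positivity)] at h
    nlinarith [h, hbq, hdq, mul_pos hbq hdq]
  have h3 : a*d + (b-1)*(d-1) ≤ c*b := by exact_mod_cast h3q
  have h4 : n * d ≤ c := by
    by_contra hc
    push_neg at hc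
    have : c + 1 ≤ n * d := hc
    nlinarith
  rw [le_div_iff₀ hdq]
  exact_mod_cast h4
end

section
/- Let C ⊂ P^r be a rational curve (a nondegenerate smooth rational curve) of degree d over an algebraically closed field of characteristic 2, with normal bundle N_C ≅ ⊕_{i=1}^{r-1} O_{P¹}(eᵢ). Given that the twisted conormal bundle N_C^∨(1) ≅ ⊕ᵢ O(d - eᵢ) is a pullback under Frobenius (so every d - eᵢ is even), if N_C satisfies interpolation then d ≡ 1 (mod r - 1). Combinatorial form: if e₁,...,e_{r-1} are integers with eᵢ ≡ d (mod 2) for all i, ∑ᵢ eᵢ = (r+1)d - 2, and |eᵢ - eⱼ| ≤ 1 for all i,j (the interpolation condition forces this), then all eᵢ are equal and d ≡ 1 (mod r-1). -/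
/-- **Rational curves in characteristic 2** (combinatorial form of Lemma
`lem:char2_xex`).  Let `C ⊂ ℙʳ` be a rational curve of degree `d` in characteristic 2
with `N_C ≅ ⊕ᵢ O(eᵢ)`.  Since `N_C^∨(1)` is a Frobenius pullback, every `eᵢ ≡ d (mod 2)`;
moreover `∑ᵢ eᵢ = c₁(N_C) = (r+1)d - 2`, and interpolation forces `|eᵢ - eⱼ| ≤ 1`.
Under these conditions all `eᵢ` are equal and `d ≡ 1 (mod r - 1)`. -/
theorem char2_rational_curve_splitting (r : ℕ) (hr : 2 ≤ r) (d : ℤ) (e : Fin (r - 1) → ℤ)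
    (hpar : ∀ i, e i ≡ d [ZMOD 2])
    (hsum : ∑ i, e i = ((r : ℤ) + 1) * d - 2)
    (hbal : ∀ i j, |e i - e j| ≤ 1) :
    (∀ i j, e i = e j) ∧ d ≡ 1 [ZMOD ((r : ℤ) - 1)] := by
  have heq : ∀ i j, e i = e j := by
    intro i j
    have h2 : (2 : ℤ) ∣ e j - e i := Int.ModEq.dvd ((hpar i).trans (hpar j).symm)
    obtain ⟨k, hk⟩ := h2
    have := abs_le.mp (hbal i j)
    omega
  refine ⟨heq, ?_⟩
  have hpos : 0 < r - 1 := by omega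
  have i0 : Fin (r - 1) := ⟨0, hpos⟩
  have hconst : ∑ i, e i = (r - 1 : ℕ) * e i0 := by
    rw [Finset.sum_congr rfl (fun i _ => heq i i0)]
    simp [Finset.sum_const, mul_comm]
  rw [hconst] at hsum
  have hcast : ((r - 1 : ℕ) : ℤ) = (r : ℤ) - 1 := by
    have : (1 : ℕ) ≤ r := by omega
    push_cast [this]
    ring
  rw [hcast] at hsum
  obtain ⟨k, hk⟩ := Int.ModEq.dvd (hpar i0)
  -- hsum : (r - 1) * e i0 = (r + 1) * d - 2,  hk : d - e i0 = 2 * k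
  rw [Int.modEq_iff_dvd]
  refine ⟨k, ?_⟩
  have h2 : 2 * (1 - d) = 2 * (((r : ℤ) - 1) * k) := by
    linear_combination hsum + ((r : ℤ) - 1) * hk
  exact mul_left_cancel₀ two_ne_zero h2
end

section
/- There is a unique k-plane in P^{2k+2} meeting each of k+2 lines in linear general position. Equivalently, given k+2 pairwise disjoint lines M₁,...,M_{k+2} in P^{2k+2} whose union spans P^{2k+2} and which are in linear general position, there exists exactly one linear subspace Λ of dimension k intersecting every Mᵢ nontrivially. -/
/-!
The relations `∑ i, xᵢ = 0` with `xᵢ ∈ Mᵢ` form the kernel of the summation map `∏ Mᵢ → V`,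
which has dimension `2(k+2) - (2k+3) = 1`. Any `k+1` of the lines are independent, so a nonzero
relation `v` has all its components `vᵢ` nonzero, and the `vᵢ` satisfy no relation other than
`∑ vᵢ = 0`; hence `Λ₀ = span {vᵢ}` is a `k`-plane meeting every line. Conversely, if a `k`-plane
`Λ` meets `Mᵢ` in `wᵢ ≠ 0`, the `k+2` vectors `wᵢ` are dependent in `Λ`; the dependence is a
nonzero relation, hence a multiple of `v`, so `Λ₀ ≤ Λ`, with equality by dimension.
-/

open Module Submodule

namespace Submodule

variable {K V ι : Type*} [Field K] [AddCommGroup V] [Module K V] [Fintype ι]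

def piSum (W : ι → Submodule K V) : (Π i, W i) →ₗ[K] V :=
  ∑ i, (W i).subtype ∘ₗ LinearMap.proj i

section piSum

variable (W : ι → Submodule K V)

@[simp]
lemma piSum_apply (x : Π i, W i) : piSum W x = ∑ i, (x i : V) := by
  simp [piSum]

lemma range_piSum : LinearMap.range (piSum W) = ⨆ i, W i := by
  classical
  refine le_antisymm ?_ (iSup_le fun i v hv => ⟨Pi.single i ⟨v, hv⟩, ?_⟩)
  · rintro _ ⟨x, rfl⟩
    rw [piSum_apply]
    exact sum_mem fun i _ => mem_iSup_of_mem i (x i).2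
  · rw [piSum_apply, Finset.sum_eq_single i (fun j _ hj => by simp [Pi.single_eq_of_ne hj])
      (by simp)]
    simp

lemma finrank_ker_piSum_add [∀ i, FiniteDimensional K (W i)] :
    finrank K (LinearMap.ker (piSum W)) + finrank K ↥(⨆ i, W i) = ∑ i, finrank K (W i) := by
  rw [← range_piSum, add_comm, LinearMap.finrank_range_add_finrank_ker, finrank_pi_fintype]

lemma eq_zero_of_mem_ker_piSum [∀ i, FiniteDimensional K (W i)] (S : Finset ι)
    (hS : finrank K ↥(⨆ i ∈ S, W i) = ∑ i ∈ S, finrank K (W i))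
    {x : Π i, W i} (hx : x ∈ LinearMap.ker (piSum W)) (hxS : ∀ i ∉ S, x i = 0) : x = 0 := by
  have hker : LinearMap.ker (piSum fun i : S => W i) = ⊥ := by
    have h := finrank_ker_piSum_add fun i : S => W i
    rw [iSup_subtype'] at hS
    rw [hS, Finset.sum_coe_sort S fun i => finrank K (W i)] at h
    exact finrank_eq_zero.mp (by omega)
  have hxS' : (fun i : S => x i) ∈ LinearMap.ker (piSum fun i : S => W i) := by
    rw [LinearMap.mem_ker, piSum_apply, Finset.sum_coe_sort S fun i => (x i : V),
      Finset.sum_subset (Finset.subset_univ S) fun i _ hi => by simp [hxS i hi]]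
    simpa using hx
  rw [hker, mem_bot] at hxS'
  funext i
  by_cases hi : i ∈ S
  · exact congrFun hxS' ⟨i, hi⟩
  · exact hxS i hi

lemma exists_ne_zero_mem_ker_piSum_of_inf_ne_bot {Λ : Submodule K V} [FiniteDimensional K Λ]
    (hΛ : finrank K Λ < Fintype.card ι) (hmeet : ∀ i, Λ ⊓ W i ≠ ⊥) :
    ∃ x ∈ LinearMap.ker (piSum W), x ≠ 0 ∧ ∀ i, (x i : V) ∈ Λ := by
  choose w hw hw0 using fun i => exists_mem_ne_zero_of_ne_bot (hmeet i)
  have hdep : ¬LinearIndependent K fun i => (⟨w i, (mem_inf.mp (hw i)).1⟩ : Λ) :=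
    fun hli => hΛ.not_ge hli.fintype_card_le_finrank
  obtain ⟨g, hg, i, hgi⟩ := Fintype.not_linearIndependent_iff.mp hdep
  refine ⟨fun i => g i • ⟨w i, (mem_inf.mp (hw i)).2⟩, ?_, fun h => ?_,
    fun i => Λ.smul_mem _ (mem_inf.mp (hw i)).1⟩
  · simpa using congrArg Subtype.val hg
  · have := congrArg Subtype.val (congrFun h i)
    simp [hgi, hw0 i] at this

end piSum

section relation

variable {W : ι → Submodule K V} {v : Π i, W i} (hv : LinearMap.ker (piSum W) = K ∙ v)
include hv

lemma coe_apply_mem_of_mem_ker_piSum {Λ : Submodule K V} {x : Π i, W i}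
    (hx : x ∈ LinearMap.ker (piSum W)) (hx0 : x ≠ 0) (hxΛ : ∀ i, (x i : V) ∈ Λ) (i : ι) :
    (v i : V) ∈ Λ := by
  obtain ⟨c, rfl⟩ := mem_span_singleton.mp (hv ▸ hx)
  have hc : c ≠ 0 := by rintro rfl; simp at hx0
  simpa [hc] using Λ.smul_mem c⁻¹ (hxΛ i)

lemma finrank_span_range_add_one [Nonempty ι] (hv0 : ∀ i, v i ≠ 0) :
    finrank K (span K (Set.range fun i => (v i : V))) + 1 = Fintype.card ι := by
  set f := Fintype.linearCombination K fun i => (v i : V)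
  have hker : LinearMap.ker f = K ∙ 1 := by
    refine le_antisymm (fun a ha => ?_) ?_
    · have : (fun i => a i • v i) ∈ LinearMap.ker (piSum W) := by
        simpa [f, Fintype.linearCombination_apply] using ha
      obtain ⟨c, hc⟩ := mem_span_singleton.mp (hv ▸ this)
      refine mem_span_singleton.mpr ⟨c, funext fun i => ?_⟩
      simpa using smul_left_injective K (hv0 i) (congrFun hc i)
    · rw [span_singleton_le_iff_mem, LinearMap.mem_ker]
      have : v ∈ LinearMap.ker (piSum W) := hv ▸ mem_span_singleton_self v
      simpa [f, Fintype.linearCombination_apply] using this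
  have := f.finrank_range_add_finrank_ker
  rwa [Fintype.range_linearCombination, hker, finrank_span_singleton one_ne_zero,
    finrank_fintype_fun_eq_card] at this

theorem existsUnique_finrank_eq_and_inf_ne_bot (hv0 : ∀ i, v i ≠ 0) {n : ℕ}
    (hn : Fintype.card ι = n + 2) :
    ∃! Λ : Submodule K V, finrank K Λ = n + 1 ∧ ∀ i, Λ ⊓ W i ≠ ⊥ := by
  have : Nonempty ι := Fintype.card_pos_iff.mp (by omega)
  have hΛ₀ : finrank K (span K (Set.range fun i => (v i : V))) = n + 1 := by
    have := finrank_span_range_add_one hv hv0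
    omega
  set Λ₀ := span K (Set.range fun i => (v i : V))
  refine ⟨Λ₀, ⟨hΛ₀, fun i h => hv0 i ?_⟩, fun Λ ⟨hΛ, hmeet⟩ => ?_⟩
  · simpa using h.le (mem_inf.mpr ⟨subset_span ⟨i, rfl⟩, (v i).2⟩)
  · have : FiniteDimensional K Λ := .of_finrank_eq_succ hΛ
    obtain ⟨x, hx, hx0, hxΛ⟩ := exists_ne_zero_mem_ker_piSum_of_inf_ne_bot W (by omega) hmeet
    have hle : Λ₀ ≤ Λ := span_le.mpr <| Set.range_subset_iff.mpr <|
      coe_apply_mem_of_mem_ker_piSum hv hx hx0 hxΛ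
    exact (eq_of_le_of_finrank_le hle (by omega)).symm

end relation

end Submodule

theorem unique_plane_meeting_lines_general {K V : Type*} [Field K]
    [AddCommGroup V] [Module K V] (k : ℕ)
    (M : Fin (k + 2) → Submodule K V)
    (hM2 : ∀ i, finrank K (M i) = 2)
    (hgen : ∀ S : Finset (Fin (k + 2)),
      finrank K ↥(⨆ i ∈ S, M i) = min (2 * S.card) (2 * k + 3)) :
    ∃! Λ : Submodule K V, finrank K Λ = k + 1 ∧ ∀ i, Λ ⊓ M i ≠ ⊥ := by
  have : ∀ i, FiniteDimensional K (M i) := fun i => .of_finrank_eq_succ (hM2 i)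
  have hker : finrank K (LinearMap.ker (piSum M)) = 1 := by
    have h := hgen Finset.univ
    have := finrank_ker_piSum_add M
    rw [show (⨆ i ∈ Finset.univ, M i) = ⨆ i, M i by simp only [Finset.mem_univ, iSup_pos],
      Finset.card_univ, Fintype.card_fin] at h
    simp only [h, hM2, Finset.sum_const, Finset.card_univ, Fintype.card_fin, smul_eq_mul] at this
    omega
  obtain ⟨v, hv, hv_ne⟩ := exists_mem_ne_zero_of_ne_bot (p := LinearMap.ker (piSum M)) <| by
    rw [Ne, ← Submodule.finrank_eq_zero]; omega
  have hindep : ∀ j, finrank K ↥(⨆ i ∈ Finset.univ.erase j, M i) =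
      ∑ i ∈ Finset.univ.erase j, finrank K (M i) := fun j => by
    rw [hgen, Finset.sum_congr rfl fun i _ => hM2 i, Finset.sum_const, smul_eq_mul,
      Finset.card_erase_of_mem (Finset.mem_univ j), Finset.card_univ, Fintype.card_fin]
    omega
  have hv0 : ∀ j, v j ≠ 0 := fun j hj =>
    hv_ne <| eq_zero_of_mem_ker_piSum M _ (hindep j) hv (by simpa)
  exact existsUnique_finrank_eq_and_inf_ne_bot
    (eq_span_singleton_of_mem_of_finrank_eq_one hker hv hv_ne) hv0 (Fintype.card_fin _)

/-- **Unique `k`-plane meeting `k+2` general lines in `ℙ^{2k+2}`** (with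
`ℙ^{2k+2} = ℙ(V)`, `dim V = 2k + 3`; lines are 2-dimensional subspaces, `k`-planes are
`(k+1)`-dimensional subspaces, and a `k`-plane `Λ` meets a line `M` iff `Λ ⊓ M ≠ ⊥`).
Given `k + 2` pairwise disjoint lines `M₁, …, M_{k+2}` in linear general position
(every subcollection spans a subspace of the expected dimension, in particular their
union spans), there is exactly one `k`-plane meeting every `Mᵢ`. -/
theorem unique_plane_meeting_lines {K V : Type*} [Field K] [IsAlgClosed K]
    [AddCommGroup V] [Module K V] (k : ℕ)
    (hV : finrank K V = 2 * k + 3)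
    (M : Fin (k + 2) → Submodule K V)
    (hM2 : ∀ i, finrank K (M i) = 2)
    (hdisj : ∀ i j, i ≠ j → M i ⊓ M j = ⊥)
    (hgen : ∀ S : Finset (Fin (k + 2)),
      finrank K ↥(⨆ i ∈ S, M i) = min (2 * S.card) (2 * k + 3)) :
    ∃! Λ : Submodule K V, finrank K Λ = k + 1 ∧ ∀ i, Λ ⊓ M i ≠ ⊥ :=
  unique_plane_meeting_lines_general k M hM2 hgen
end
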